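/- arXiv:2210.07780 — 3 statements merged into one kernel-verified Lean document; each statement's English description precedes it below -/
import Mathlib

section
/- Let v ∈ P and let ω, ω' ∈ Γ both be common solutions, i.e., each simultaneously attains max_{ω''∈Γ} g̃_v(ω'') and max_{ω''∈Γ} g̃_v^{(j)}(ω'') for every j ∈ {1,…,L}. Then ω = ω'. (Lemma 13 of the paper.) -/
open Finset
open scoped Classical

namespace HetTS

noncomputable section

variable {K M : ℕ}

/-- Number of clients having access to arm `i`. -/
def Mi (S : Fin M → Finset (Fin K)) (i : Fin K) : ℕ :=
  (Finset.univ.filter fun m => i ∈ S m).card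

/-- The mean reward `μ_i(v)` of arm `i`: average of the means of arm `i` across the clients
having access to it. -/
def armMean (S : Fin M → Finset (Fin K)) (v : Fin M → Fin K → ℝ) (i : Fin K) : ℝ :=
  (1 / (Mi S i : ℝ)) * ∑ m ∈ Finset.univ.filter (fun m => i ∈ S m), v m i

/-- Arm `i` is the (unique) best arm of client `m` under instance `v`. -/
def isBest (S : Fin M → Finset (Fin K)) (v : Fin M → Fin K → ℝ) (m : Fin M) (i : Fin K) :
    Prop :=
  i ∈ S m ∧ ∀ j ∈ S m, j ≠ i → armMean S v j < armMean S v i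

/-- The set `P` of problem instances having a unique best arm at each client. -/
def PSet (S : Fin M → Finset (Fin K)) : Set (Fin M → Fin K → ℝ) :=
  {v | ∀ m, ∃ i, isBest S v m i}

/-- The set of alternative instances `Alt(v)`: instances in `P` whose tuple of best arms
differs from that of `v`. -/
def AltSet (S : Fin M → Finset (Fin K)) (v : Fin M → Fin K → ℝ) :
    Set (Fin M → Fin K → ℝ) :=
  {v' | v' ∈ PSet S ∧ ¬ ∀ (m : Fin M) (i : Fin K), isBest S v m i ↔ isBest S v' m i}

/-- The set `Γ` of allocations: families `(ω_{i,m})_{m, i ∈ S_m}` of nonnegative weights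
summing to one for each client (represented as functions vanishing off the support). -/
def Gam (S : Fin M → Finset (Fin K)) : Set (Fin M → Fin K → ℝ) :=
  {ω | (∀ m, ∀ i ∈ S m, 0 ≤ ω m i) ∧ (∀ m, ∑ i ∈ S m, ω m i = 1) ∧
    ∀ m, ∀ i, i ∉ S m → ω m i = 0}

/-- `g_v(ω)`, the inner infimum over alternative instances. -/
def gfun (S : Fin M → Finset (Fin K)) (v ω : Fin M → Fin K → ℝ) : ℝ :=
  sInf {x | ∃ v' ∈ AltSet S v,
    x = ∑ m : Fin M, ∑ i ∈ S m, ω m i * (v m i - v' m i) ^ 2 / 2}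

/-- The gap `Δ_i(v)`. -/
def Delta (S : Fin M → Finset (Fin K)) (v : Fin M → Fin K → ℝ) (i : Fin K) : ℝ :=
  sInf {x | ∃ m : Fin M, i ∈ S m ∧
    x = |armMean S v i - sSup {y | ∃ j ∈ S m, j ≠ i ∧ y = armMean S v j}|}

/-- The denominator `(1/M_i²) ∑_{m : i ∈ S_m} 1/ω_{i,m}`. -/
def armDenom (S : Fin M → Finset (Fin K)) (ω : Fin M → Fin K → ℝ) (i : Fin K) : ℝ :=
  (1 / (Mi S i : ℝ) ^ 2) * ∑ m ∈ Finset.univ.filter (fun m => i ∈ S m), 1 / ω m i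

/-- The simplified objective `g̃_v(ω)`. -/
def gtilde (S : Fin M → Finset (Fin K)) (v ω : Fin M → Fin K → ℝ) : ℝ :=
  if ∃ m, ∃ i ∈ S m, ω m i = 0 then 0
  else sInf {x | ∃ i : Fin K, x = (Delta S v i) ^ 2 / 2 / armDenom S ω i}

/-- The relation `R` on arms: two arms are related if some client has access to both. -/
def armRel (S : Fin M → Finset (Fin K)) (i₁ i₂ : Fin K) : Prop :=
  ∃ m, i₁ ∈ S m ∧ i₂ ∈ S m

/-- The equivalence class `Q` of arm `i` under the smallest equivalence relation
containing `R`. -/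
def armClass (S : Fin M → Finset (Fin K)) (i : Fin K) : Set (Fin K) :=
  {i' | Relation.EqvGen (armRel S) i i'}

/-- Same equivalence class, as a `Finset`. -/
def classFinset (S : Fin M → Finset (Fin K)) (i : Fin K) : Finset (Fin K) :=
  Finset.univ.filter fun i' => Relation.EqvGen (armRel S) i i'

/-- The per-class objective `g̃_v^{(j)}(ω)` where `Q` is the `j`-th equivalence class. -/
def gtildeC (S : Fin M → Finset (Fin K)) (v : Fin M → Fin K → ℝ) (Q : Set (Fin K))
    (ω : Fin M → Fin K → ℝ) : ℝ :=
  if ∃ m, ∃ i ∈ S m, i ∈ Q ∧ ω m i = 0 then 0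
  else sInf {x | ∃ i ∈ Q, x = (Delta S v i) ^ 2 / armDenom S ω i}

/-- `ω` is a common solution: it simultaneously attains `max_{ω'∈Γ} g̃_v(ω')` and
`max_{ω'∈Γ} g̃_v^{(j)}(ω')` for every equivalence class `Q_j`. -/
def IsCommonSol (S : Fin M → Finset (Fin K)) (v ω : Fin M → Fin K → ℝ) : Prop :=
  ω ∈ Gam S ∧ (∀ ω' ∈ Gam S, gtilde S v ω' ≤ gtilde S v ω) ∧
    ∀ i : Fin K, ∀ ω' ∈ Gam S,
      gtildeC S v (armClass S i) ω' ≤ gtildeC S v (armClass S i) ω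

/-- The balanced condition. -/
def BalancedCond (S : Fin M → Finset (Fin K)) (ω : Fin M → Fin K → ℝ) : Prop :=
  ∀ m₁ m₂ : Fin M, ∀ i₁ i₂ : Fin K, i₁ ∈ S m₁ → i₂ ∈ S m₁ → i₁ ∈ S m₂ → i₂ ∈ S m₂ →
    ω m₁ i₁ / ω m₁ i₂ = ω m₂ i₁ / ω m₂ i₂

/-- The pseudo-balanced condition for instance `v`. -/
def PseudoBalancedCond (S : Fin M → Finset (Fin K)) (v ω : Fin M → Fin K → ℝ) : Prop :=
  ∀ i₁ i₂ : Fin K, Relation.EqvGen (armRel S) i₁ i₂ →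
    (Delta S v i₁) ^ 2 / armDenom S ω i₁ = (Delta S v i₂) ^ 2 / armDenom S ω i₂

/-- The matrix `H(v)` (restricted to a class it gives `H^{(j)}(v)`). -/
def Hmat (S : Fin M → Finset (Fin K)) (v : Fin M → Fin K → ℝ) (i₁ i₂ : Fin K) : ℝ :=
  (1 / ((Delta S v i₁) ^ 2 * (Mi S i₁ : ℝ) ^ 2)) *
    ((Finset.univ.filter fun m => i₁ ∈ S m ∧ i₂ ∈ S m).card : ℝ)

/-! ### Auxiliary lemmas -/

lemma finite_exists_set {α : Type*} [Finite α] (g : α → ℝ) (P : α → Prop) :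
    {x : ℝ | ∃ a, P a ∧ x = g a}.Finite :=
  Set.Finite.subset (Set.finite_range g) (by rintro x ⟨a, _, rfl⟩; exact ⟨a, rfl⟩)

lemma Mi_pos (S : Fin M → Finset (Fin K)) (i : Fin K) (hcov : ∃ m, i ∈ S m) :
    0 < Mi S i := by
  obtain ⟨m, hm⟩ := hcov
  exact Finset.card_pos.mpr ⟨m, Finset.mem_filter.mpr ⟨Finset.mem_univ m, hm⟩⟩

lemma armDenom_pos (S : Fin M → Finset (Fin K)) (ω : Fin M → Fin K → ℝ) (i : Fin K)
    (hcov : ∃ m, i ∈ S m) (hpos : ∀ m, i ∈ S m → 0 < ω m i) :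
    0 < armDenom S ω i := by
  have hMi : (0:ℝ) < (Mi S i : ℝ) := by exact_mod_cast Mi_pos S i hcov
  obtain ⟨m, hm⟩ := hcov
  apply mul_pos (by positivity)
  apply Finset.sum_pos
  · intro m' hm'
    have : i ∈ S m' := (Finset.mem_filter.mp hm').2
    have := hpos m' this
    positivity
  · exact ⟨m, Finset.mem_filter.mpr ⟨Finset.mem_univ m, hm⟩⟩

lemma delta_pos (S : Fin M → Finset (Fin K)) (hS : ∀ m, 2 ≤ (S m).card)
    (v : Fin M → Fin K → ℝ) (hv : v ∈ PSet S) (i : Fin K) (hcov : ∃ m, i ∈ S m) :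
    0 < Delta S v i := by
  have hfin : {x : ℝ | ∃ m : Fin M, i ∈ S m ∧
      x = |armMean S v i - sSup {y | ∃ j ∈ S m, j ≠ i ∧ y = armMean S v j}|}.Finite :=
    finite_exists_set _ _
  obtain ⟨m₀, hm₀⟩ := hcov
  have hne : {x : ℝ | ∃ m : Fin M, i ∈ S m ∧
      x = |armMean S v i - sSup {y | ∃ j ∈ S m, j ≠ i ∧ y = armMean S v j}|}.Nonempty :=
    ⟨_, m₀, hm₀, rfl⟩
  have hmem := Set.Nonempty.csInf_mem hne hfin
  rw [Delta]
  obtain ⟨m, hm, hx⟩ := hmem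
  rw [hx]
  -- the inner set equals a finset image
  have hset : {y | ∃ j ∈ S m, j ≠ i ∧ y = armMean S v j}
      = ↑(((S m).erase i).image (armMean S v)) := by
    ext y
    simp only [Set.mem_setOf_eq, Finset.coe_image, Set.mem_image, Finset.mem_coe,
      Finset.mem_erase]
    constructor
    · rintro ⟨j, hj, hji, rfl⟩; exact ⟨j, ⟨hji, hj⟩, rfl⟩
    · rintro ⟨j, ⟨hji, hj⟩, rfl⟩; exact ⟨j, hj, hji, rfl⟩
  obtain ⟨j₁, hj₁, hj₁i⟩ := Finset.exists_mem_ne (lt_of_lt_of_le one_lt_two (hS m)) i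
  have herne : (((S m).erase i).image (armMean S v)).Nonempty :=
    ⟨_, Finset.mem_image_of_mem _ (Finset.mem_erase.mpr ⟨hj₁i, hj₁⟩)⟩
  rw [hset, Finset.Nonempty.csSup_eq_max' herne]
  obtain ⟨b, hb⟩ := hv m
  have hne2 : armMean S v i ≠ (((S m).erase i).image (armMean S v)).max' herne := by
    obtain ⟨y, hy, hymax⟩ := Finset.mem_image.mp (Finset.max'_mem _ herne)
    obtain ⟨hyi, hyS⟩ := Finset.mem_erase.mp hy
    by_cases hbi : b = i
    · subst hbi
      have := hb.2 y hyS hyi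
      rw [← hymax]
      exact ne_of_gt this
    · have h1 : armMean S v i < armMean S v b := hb.2 i hm (fun h => hbi h.symm)
      have h2 : armMean S v b ≤ (((S m).erase i).image (armMean S v)).max' herne :=
        Finset.le_max' _ _ (Finset.mem_image_of_mem _
          (Finset.mem_erase.mpr ⟨hbi, hb.1⟩))
      exact ne_of_lt (lt_of_lt_of_le h1 h2)
  exact abs_pos.mpr (sub_ne_zero.mpr hne2)

/-- The uniform allocation. -/
def unif (S : Fin M → Finset (Fin K)) : Fin M → Fin K → ℝ :=
  fun m i => if i ∈ S m then ((S m).card : ℝ)⁻¹ else 0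

lemma unif_pos (S : Fin M → Finset (Fin K)) (hS : ∀ m, 2 ≤ (S m).card)
    {m : Fin M} {i : Fin K} (hi : i ∈ S m) : 0 < unif S m i := by
  rw [unif, if_pos hi]
  have : (0:ℝ) < ((S m).card : ℝ) := by
    have := hS m; positivity
  positivity

lemma unif_mem (S : Fin M → Finset (Fin K)) (hS : ∀ m, 2 ≤ (S m).card) :
    unif S ∈ Gam S := by
  refine ⟨fun m i hi => le_of_lt (unif_pos S hS hi), fun m => ?_, fun m i hi => if_neg hi⟩
  have hcard : ((S m).card : ℝ) ≠ 0 := by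
    have := hS m; positivity
  simp only [unif]
  rw [Finset.sum_congr rfl (fun i hi => if_pos hi), Finset.sum_const, nsmul_eq_mul,
    mul_inv_cancel₀ hcard]

lemma gtildeC_pos_of_pos (S : Fin M → Finset (Fin K)) (hS : ∀ m, 2 ≤ (S m).card)
    (hcov : ∀ i : Fin K, ∃ m, i ∈ S m) (v : Fin M → Fin K → ℝ) (hv : v ∈ PSet S)
    (Q : Set (Fin K)) (i₀ : Fin K) (hi₀ : i₀ ∈ Q) (ω : Fin M → Fin K → ℝ)
    (hpos : ∀ m, ∀ i ∈ S m, 0 < ω m i) :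
    0 < gtildeC S v Q ω := by
  rw [gtildeC, if_neg]
  · have hfin : {x : ℝ | ∃ i ∈ Q, x = Delta S v i ^ 2 / armDenom S ω i}.Finite :=
      finite_exists_set _ _
    have hne : {x : ℝ | ∃ i ∈ Q, x = Delta S v i ^ 2 / armDenom S ω i}.Nonempty :=
      ⟨_, i₀, hi₀, rfl⟩
    obtain ⟨i, _, hx⟩ := Set.Nonempty.csInf_mem hne hfin
    rw [hx]
    exact div_pos (pow_pos (delta_pos S hS v hv i (hcov i)) 2)
      (armDenom_pos S ω i (hcov i) (fun m hm => hpos m i hm))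
  · rintro ⟨m, i, hi, _, h0⟩
    exact absurd h0 (ne_of_gt (hpos m i hi))

lemma common_pos (S : Fin M → Finset (Fin K)) (hS : ∀ m, 2 ≤ (S m).card)
    (hcov : ∀ i : Fin K, ∃ m, i ∈ S m) (v : Fin M → Fin K → ℝ) (hv : v ∈ PSet S)
    (ω : Fin M → Fin K → ℝ) (hω : IsCommonSol S v ω) :
    ∀ m, ∀ i ∈ S m, 0 < ω m i := by
  intro m i hi
  rcases (hω.1.1 m i hi).lt_or_eq with h | h
  · exact h
  · exfalso
    have hzero : gtildeC S v (armClass S i) ω = 0 := by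
      rw [gtildeC, if_pos]
      exact ⟨m, i, hi, Relation.EqvGen.refl i, h.symm⟩
    have hle := hω.2.2 i (unif S) (unif_mem S hS)
    rw [hzero] at hle
    exact absurd (lt_of_lt_of_le (gtildeC_pos_of_pos S hS hcov v hv (armClass S i) i
      (Relation.EqvGen.refl i) (unif S) (fun m i hi => unif_pos S hS hi)) hle) (lt_irrefl 0)

lemma armRel_symm (S : Fin M → Finset (Fin K)) : Symmetric (armRel S) := by
  rintro a b ⟨m, h1, h2⟩; exact ⟨m, h2, h1⟩

lemma class_closed (S : Fin M → Finset (Fin K)) {i₀ i j : Fin K}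
    (h : Relation.EqvGen (armRel S) i₀ i) {m : Fin M} (hi : i ∈ S m) (hj : j ∈ S m) :
    Relation.EqvGen (armRel S) i₀ j :=
  Relation.EqvGen.trans _ _ _ h (Relation.EqvGen.rel _ _ ⟨m, hi, hj⟩)

lemma rtg_symm (S : Fin M → Finset (Fin K)) {a b : Fin K}
    (h : Relation.ReflTransGen (armRel S) a b) : Relation.ReflTransGen (armRel S) b a := by
  induction h with
  | refl => exact Relation.ReflTransGen.refl
  | tail _ h2 ih => exact Relation.ReflTransGen.head (armRel_symm S h2) ih

lemma eqvGen_imp_rtg (S : Fin M → Finset (Fin K)) {a b : Fin K}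
    (h : Relation.EqvGen (armRel S) a b) : Relation.ReflTransGen (armRel S) a b := by
  induction h with
  | rel x y hxy => exact Relation.ReflTransGen.single hxy
  | refl x => exact Relation.ReflTransGen.refl
  | symm x y _ ih => exact rtg_symm S ih
  | trans x y z _ _ ih1 ih2 => exact Relation.ReflTransGen.trans ih1 ih2

lemma crossing (S : Fin M → Finset (Fin K)) (P : Fin K → Prop) {a b : Fin K}
    (h : Relation.ReflTransGen (armRel S) a b) (ha : P a) (hb : ¬ P b) :
    ∃ p q m, p ∈ S m ∧ q ∈ S m ∧ P p ∧ ¬ P q := by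
  induction h with
  | refl => exact absurd ha hb
  | @tail x c _ h2 ih =>
    by_cases hP : P x
    · obtain ⟨m, hxm, hcm⟩ := h2
      exact ⟨x, c, m, hxm, hcm, hP, hb⟩
    · exact ih hP

/-- The per-arm objective value. -/
def fval (S : Fin M → Finset (Fin K)) (v ω : Fin M → Fin K → ℝ) (i : Fin K) : ℝ :=
  Delta S v i ^ 2 / armDenom S ω i

lemma fval_eq (S : Fin M → Finset (Fin K)) (v ω : Fin M → Fin K → ℝ) (i : Fin K) :
    fval S v ω i = (Delta S v i ^ 2 * (Mi S i : ℝ) ^ 2) *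
      (∑ m ∈ Finset.univ.filter (fun m => i ∈ S m), 1 / ω m i)⁻¹ := by
  rw [fval, armDenom, one_div, inv_mul_eq_div, div_div_eq_mul_div, div_eq_mul_inv, mul_assoc]

lemma two_point (a b p q θ : ℝ) (ha : 0 < a) (hb : 0 < b) (hθ : 0 < θ) (hθ1 : θ < 1)
    (hpq : p + q = 1) :
    (θ * a + (1 - θ) * b)⁻¹ ≤ p ^ 2 / θ * (1 / a) + q ^ 2 / (1 - θ) * (1 / b) := by
  have h1 : 0 < θ * a := by positivity
  have hθ1' : 0 < 1 - θ := by linarith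
  have h2 : 0 < (1 - θ) * b := by positivity
  rw [div_mul_div_comm, div_mul_div_comm, mul_one, mul_one]
  rw [inv_eq_one_div, div_add_div _ _ (by positivity : θ * a ≠ 0) (by positivity : (1-θ) * b ≠ 0),
    div_le_div_iff₀ (by positivity) (by positivity)]
  have hq : q = 1 - p := by linarith
  subst hq
  nlinarith [sq_nonneg (p * ((1 - θ) * b) - (1 - p) * (θ * a)), mul_pos h1 h2]

lemma harmonic_combo {ι : Type*} (T : Finset ι) (hT : T.Nonempty) (x y : ι → ℝ)
    (hx : ∀ m ∈ T, 0 < x m) (hy : ∀ m ∈ T, 0 < y m) (θ : ℝ) (hθ : 0 < θ) (hθ1 : θ < 1) :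
    θ * (∑ m ∈ T, 1 / x m)⁻¹ + (1 - θ) * (∑ m ∈ T, 1 / y m)⁻¹
      ≤ (∑ m ∈ T, 1 / (θ * x m + (1 - θ) * y m))⁻¹ := by
  have hθ1' : (0:ℝ) < 1 - θ := by linarith
  set U := ∑ m ∈ T, 1 / x m with hUdef
  set V := ∑ m ∈ T, 1 / y m with hVdef
  have hU : 0 < U := Finset.sum_pos (fun m hm => by have := hx m hm; positivity) hT
  have hV : 0 < V := Finset.sum_pos (fun m hm => by have := hy m hm; positivity) hT
  set W := θ * U⁻¹ + (1 - θ) * V⁻¹ with hWdef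
  have hW : 0 < W := by positivity
  set p := (θ * U⁻¹) / W with hpdef
  set q := ((1 - θ) * V⁻¹) / W with hqdef
  have hpq : p + q = 1 := by
    rw [hpdef, hqdef, ← add_div, div_self (ne_of_gt hW)]
  have hZpos : 0 < ∑ m ∈ T, 1 / (θ * x m + (1 - θ) * y m) :=
    Finset.sum_pos (fun m hm => by have := hx m hm; have := hy m hm; positivity) hT
  have key : ∑ m ∈ T, 1 / (θ * x m + (1 - θ) * y m)
      ≤ p ^ 2 / θ * U + q ^ 2 / (1 - θ) * V := by
    calc ∑ m ∈ T, 1 / (θ * x m + (1 - θ) * y m)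
        ≤ ∑ m ∈ T, (p ^ 2 / θ * (1 / x m) + q ^ 2 / (1 - θ) * (1 / y m)) := by
          apply Finset.sum_le_sum
          intro m hm
          rw [one_div]
          exact two_point (x m) (y m) p q θ (hx m hm) (hy m hm) hθ hθ1 hpq
      _ = p ^ 2 / θ * U + q ^ 2 / (1 - θ) * V := by
          rw [Finset.sum_add_distrib, ← Finset.mul_sum, ← Finset.mul_sum]
  have hval : p ^ 2 / θ * U + q ^ 2 / (1 - θ) * V = W⁻¹ := by
    rw [hpdef, hqdef, hWdef]
    field_simp
  rw [hval] at key
  have := inv_anti₀ hZpos key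
  rwa [inv_inv] at this

lemma fval_combo (S : Fin M → Finset (Fin K)) (v : Fin M → Fin K → ℝ) (i : Fin K)
    (hcov : ∃ m, i ∈ S m) (σ τ : Fin M → Fin K → ℝ)
    (hσ : ∀ m, i ∈ S m → 0 < σ m i) (hτ : ∀ m, i ∈ S m → 0 < τ m i)
    (θ : ℝ) (hθ : 0 < θ) (hθ1 : θ < 1) :
    θ * fval S v σ i + (1 - θ) * fval S v τ i
      ≤ fval S v (fun m j => θ * σ m j + (1 - θ) * τ m j) i := by
  rw [fval_eq, fval_eq, fval_eq]
  set c := Delta S v i ^ 2 * (Mi S i : ℝ) ^ 2 with hcdef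
  have hc : 0 ≤ c := by positivity
  set T := Finset.univ.filter (fun m => i ∈ S m) with hTdef
  obtain ⟨m₀, hm₀⟩ := hcov
  have hT : T.Nonempty := ⟨m₀, Finset.mem_filter.mpr ⟨Finset.mem_univ _, hm₀⟩⟩
  have hkey := harmonic_combo T hT (fun m => σ m i) (fun m => τ m i)
    (fun m hm => hσ m (Finset.mem_filter.mp hm).2)
    (fun m hm => hτ m (Finset.mem_filter.mp hm).2) θ hθ hθ1
  calc θ * (c * (∑ m ∈ T, 1 / σ m i)⁻¹) + (1 - θ) * (c * (∑ m ∈ T, 1 / τ m i)⁻¹)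
      = c * (θ * (∑ m ∈ T, 1 / σ m i)⁻¹ + (1 - θ) * (∑ m ∈ T, 1 / τ m i)⁻¹) := by ring
    _ ≤ c * (∑ m ∈ T, 1 / (θ * σ m i + (1 - θ) * τ m i))⁻¹ :=
        mul_le_mul_of_nonneg_left hkey hc

lemma mid_term (a b : ℝ) (ha : 0 < a) (hb : 0 < b) :
    1 / ((a + b) / 2) ≤ (1 / a + 1 / b) / 2 := by
  rw [div_le_div_iff₀ (by positivity) (by norm_num : (0:ℝ) < 2),
    div_add_div _ _ (ne_of_gt ha) (ne_of_gt hb), div_mul_eq_mul_div,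
    le_div_iff₀ (by positivity)]
  nlinarith [sq_nonneg (a - b)]

lemma mid_term_lt (a b : ℝ) (ha : 0 < a) (hb : 0 < b) (hab : a ≠ b) :
    1 / ((a + b) / 2) < (1 / a + 1 / b) / 2 := by
  rw [div_lt_div_iff₀ (by positivity) (by norm_num : (0:ℝ) < 2),
    div_add_div _ _ (ne_of_gt ha) (ne_of_gt hb), div_mul_eq_mul_div,
    lt_div_iff₀ (by positivity)]
  have h0 : a - b ≠ 0 := sub_ne_zero.mpr hab
  have h2 : (0:ℝ) < (a - b) ^ 2 :=
    lt_of_le_of_ne (sq_nonneg _) (Ne.symm (pow_ne_zero 2 h0))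
  nlinarith [h2]

lemma fval_mid_ge (S : Fin M → Finset (Fin K)) (v : Fin M → Fin K → ℝ) (i : Fin K)
    (hcov : ∃ m, i ∈ S m) (ω ω' : Fin M → Fin K → ℝ)
    (hωp : ∀ m, i ∈ S m → 0 < ω m i) (hω'p : ∀ m, i ∈ S m → 0 < ω' m i) :
    min (fval S v ω i) (fval S v ω' i)
      ≤ fval S v (fun m j => (ω m j + ω' m j) / 2) i := by
  rw [fval_eq, fval_eq, fval_eq]
  set c := Delta S v i ^ 2 * (Mi S i : ℝ) ^ 2 with hcdef
  have hc : 0 ≤ c := by positivity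
  set T := Finset.univ.filter (fun m => i ∈ S m) with hTdef
  obtain ⟨m₀, hm₀⟩ := hcov
  have hT : T.Nonempty := ⟨m₀, Finset.mem_filter.mpr ⟨Finset.mem_univ _, hm₀⟩⟩
  set U := ∑ m ∈ T, 1 / ω m i with hUdef
  set V := ∑ m ∈ T, 1 / ω' m i with hVdef
  have hU : 0 < U := Finset.sum_pos (fun m hm => by
    have := hωp m (Finset.mem_filter.mp hm).2; positivity) hT
  have hV : 0 < V := Finset.sum_pos (fun m hm => by
    have := hω'p m (Finset.mem_filter.mp hm).2; positivity) hT
  have hZpos : 0 < ∑ m ∈ T, 1 / ((ω m i + ω' m i) / 2) := Finset.sum_pos (fun m hm => by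
    have h1 := hωp m (Finset.mem_filter.mp hm).2
    have h2 := hω'p m (Finset.mem_filter.mp hm).2; positivity) hT
  have hZ : ∑ m ∈ T, 1 / ((ω m i + ω' m i) / 2) ≤ max U V := by
    calc ∑ m ∈ T, 1 / ((ω m i + ω' m i) / 2)
        ≤ ∑ m ∈ T, (1 / ω m i + 1 / ω' m i) / 2 := Finset.sum_le_sum (fun m hm =>
          mid_term _ _ (hωp m (Finset.mem_filter.mp hm).2) (hω'p m (Finset.mem_filter.mp hm).2))
      _ = (U + V) / 2 := by rw [← Finset.sum_div, Finset.sum_add_distrib]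
      _ ≤ max U V := by rcases max_cases U V with ⟨h1, h2⟩ | ⟨h1, h2⟩ <;> rw [h1] <;> linarith
  have hmin : min (c * U⁻¹) (c * V⁻¹) = c * (max U V)⁻¹ := by
    rcases max_cases U V with ⟨h1, h2⟩ | ⟨h1, h2⟩ <;> rw [h1]
    · exact min_eq_left (mul_le_mul_of_nonneg_left (inv_anti₀ hV h2) hc)
    · exact min_eq_right (mul_le_mul_of_nonneg_left (inv_anti₀ hU (le_of_lt h2)) hc)
  rw [hmin]
  exact mul_le_mul_of_nonneg_left (inv_anti₀ hZpos hZ) hc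

lemma fval_mid_gt (S : Fin M → Finset (Fin K)) (v : Fin M → Fin K → ℝ) (i : Fin K)
    (hcov : ∃ m, i ∈ S m) (hΔ : 0 < Delta S v i) (hMi : 0 < Mi S i)
    (ω ω' : Fin M → Fin K → ℝ)
    (hωp : ∀ m, i ∈ S m → 0 < ω m i) (hω'p : ∀ m, i ∈ S m → 0 < ω' m i)
    (hne : ∃ m, i ∈ S m ∧ ω m i ≠ ω' m i) :
    min (fval S v ω i) (fval S v ω' i)
      < fval S v (fun m j => (ω m j + ω' m j) / 2) i := by
  rw [fval_eq, fval_eq, fval_eq]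
  set c := Delta S v i ^ 2 * (Mi S i : ℝ) ^ 2 with hcdef
  have hMiR : (0:ℝ) < (Mi S i : ℝ) := by exact_mod_cast hMi
  have hc : 0 < c := by positivity
  set T := Finset.univ.filter (fun m => i ∈ S m) with hTdef
  obtain ⟨m₀, hm₀⟩ := hcov
  have hT : T.Nonempty := ⟨m₀, Finset.mem_filter.mpr ⟨Finset.mem_univ _, hm₀⟩⟩
  set U := ∑ m ∈ T, 1 / ω m i with hUdef
  set V := ∑ m ∈ T, 1 / ω' m i with hVdef
  have hU : 0 < U := Finset.sum_pos (fun m hm => by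
    have := hωp m (Finset.mem_filter.mp hm).2; positivity) hT
  have hV : 0 < V := Finset.sum_pos (fun m hm => by
    have := hω'p m (Finset.mem_filter.mp hm).2; positivity) hT
  have hZpos : 0 < ∑ m ∈ T, 1 / ((ω m i + ω' m i) / 2) := Finset.sum_pos (fun m hm => by
    have h1 := hωp m (Finset.mem_filter.mp hm).2
    have h2 := hω'p m (Finset.mem_filter.mp hm).2; positivity) hT
  obtain ⟨m₁, hm₁, hne₁⟩ := hne
  have hZ : ∑ m ∈ T, 1 / ((ω m i + ω' m i) / 2) < max U V := by
    calc ∑ m ∈ T, 1 / ((ω m i + ω' m i) / 2)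
        < ∑ m ∈ T, (1 / ω m i + 1 / ω' m i) / 2 := by
          apply Finset.sum_lt_sum (fun m hm =>
            mid_term _ _ (hωp m (Finset.mem_filter.mp hm).2) (hω'p m (Finset.mem_filter.mp hm).2))
          exact ⟨m₁, Finset.mem_filter.mpr ⟨Finset.mem_univ _, hm₁⟩,
            mid_term_lt _ _ (hωp m₁ hm₁) (hω'p m₁ hm₁) hne₁⟩
      _ = (U + V) / 2 := by rw [← Finset.sum_div, Finset.sum_add_distrib]
      _ ≤ max U V := by rcases max_cases U V with ⟨h1, h2⟩ | ⟨h1, h2⟩ <;> rw [h1] <;> linarith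
  have hmin : min (c * U⁻¹) (c * V⁻¹) = c * (max U V)⁻¹ := by
    rcases max_cases U V with ⟨h1, h2⟩ | ⟨h1, h2⟩ <;> rw [h1]
    · exact min_eq_left (mul_le_mul_of_nonneg_left (inv_anti₀ hV h2) (le_of_lt hc))
    · exact min_eq_right (mul_le_mul_of_nonneg_left (inv_anti₀ hU (le_of_lt h2)) (le_of_lt hc))
  rw [hmin]
  exact mul_lt_mul_of_pos_left (inv_strictAnti₀ hZpos hZ) hc

set_option maxHeartbeats 2000000 in
lemma pb_aux (S : Fin M → Finset (Fin K)) (hS : ∀ m, 2 ≤ (S m).card)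
    (hcov : ∀ i : Fin K, ∃ m, i ∈ S m) (v : Fin M → Fin K → ℝ) (hv : v ∈ PSet S)
    (i₀ : Fin K) :
    ∀ n : ℕ, ∀ σ : Fin M → Fin K → ℝ, σ ∈ Gam S →
    (∀ m, ∀ i ∈ S m, Relation.EqvGen (armRel S) i₀ i → 0 < σ m i) →
    (∀ ω' ∈ Gam S, gtildeC S v (armClass S i₀) ω' ≤ gtildeC S v (armClass S i₀) σ) →
    (Finset.univ.filter (fun i => Relation.EqvGen (armRel S) i₀ i ∧
       fval S v σ i = gtildeC S v (armClass S i₀) σ)).card ≤ n →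
    (∃ b, Relation.EqvGen (armRel S) i₀ b ∧
       fval S v σ b ≠ gtildeC S v (armClass S i₀) σ) →
    False := by
  intro n
  induction n with
  | zero =>
    intro σ hΓ hpos hmax hcard hb
    set t := gtildeC S v (armClass S i₀) σ with ht
    have hteq : t = sInf {x | ∃ i ∈ armClass S i₀, x = Delta S v i ^ 2 / armDenom S σ i} := by
      rw [ht, gtildeC, if_neg]
      rintro ⟨m, i, hiS, hiQ, h0⟩
      exact (hpos m i hiS hiQ).ne' h0
    have hQfin : {x : ℝ | ∃ i ∈ armClass S i₀, x = Delta S v i ^ 2 / armDenom S σ i}.Finite :=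
      finite_exists_set _ _
    have hQne : {x : ℝ | ∃ i ∈ armClass S i₀, x = Delta S v i ^ 2 / armDenom S σ i}.Nonempty :=
      ⟨_, i₀, Relation.EqvGen.refl i₀, rfl⟩
    obtain ⟨i, hiQ, heq⟩ := Set.Nonempty.csInf_mem hQne hQfin
    have : i ∈ Finset.univ.filter (fun i => Relation.EqvGen (armRel S) i₀ i ∧
        fval S v σ i = t) := by
      refine Finset.mem_filter.mpr ⟨Finset.mem_univ _, hiQ, ?_⟩
      rw [fval, hteq, ← heq]
    have := Finset.card_pos.mpr ⟨i, this⟩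
    omega
  | succ n ih =>
    intro σ hΓ hpos hmax hcard hb
    set t := gtildeC S v (armClass S i₀) σ with ht
    have hteq : t = sInf {x | ∃ i ∈ armClass S i₀, x = Delta S v i ^ 2 / armDenom S σ i} := by
      rw [ht, gtildeC, if_neg]
      rintro ⟨m, i, hiS, hiQ, h0⟩
      exact (hpos m i hiS hiQ).ne' h0
    have hQfin : {x : ℝ | ∃ i ∈ armClass S i₀, x = Delta S v i ^ 2 / armDenom S σ i}.Finite :=
      finite_exists_set _ _
    have hQne : {x : ℝ | ∃ i ∈ armClass S i₀, x = Delta S v i ^ 2 / armDenom S σ i}.Nonempty :=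
      ⟨_, i₀, Relation.EqvGen.refl i₀, rfl⟩
    have hlow : ∀ i, Relation.EqvGen (armRel S) i₀ i → t ≤ fval S v σ i := by
      intro i hi
      rw [hteq]
      exact csInf_le hQfin.bddBelow ⟨i, hi, rfl⟩
    have htpos : 0 < t :=
      lt_of_lt_of_le (gtildeC_pos_of_pos S hS hcov v hv (armClass S i₀) i₀
        (Relation.EqvGen.refl i₀) (unif S) (fun m i hi => unif_pos S hS hi))
        (hmax (unif S) (unif_mem S hS))
    have hattain : ∃ i, Relation.EqvGen (armRel S) i₀ i ∧ fval S v σ i = t := by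
      obtain ⟨i, hiQ, heq⟩ := Set.Nonempty.csInf_mem hQne hQfin
      exact ⟨i, hiQ, by rw [fval, hteq, ← heq]⟩
    obtain ⟨b₀, hb₀Q, hb₀ne⟩ := hb
    have hb₀gt : t < fval S v σ b₀ := lt_of_le_of_ne (hlow b₀ hb₀Q) (Ne.symm hb₀ne)
    obtain ⟨a₀, ha₀Q, ha₀t⟩ := hattain
    -- find a crossing client
    have hpath : Relation.ReflTransGen (armRel S) a₀ b₀ :=
      eqvGen_imp_rtg S (Relation.EqvGen.trans _ _ _
        (Relation.EqvGen.symm _ _ ha₀Q) hb₀Q)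
    obtain ⟨p, qa, mp, hpS, hqS, hPp, hPq⟩ := crossing S
      (fun i => Relation.EqvGen (armRel S) i₀ i ∧ fval S v σ i = t) hpath
      ⟨ha₀Q, ha₀t⟩ (fun h => hb₀ne h.2)
    have hqQ : Relation.EqvGen (armRel S) i₀ qa := class_closed S hPp.1 hpS hqS
    have hqne : fval S v σ qa ≠ t := fun h => hPq ⟨hqQ, h⟩
    -- the tight set
    set A := Finset.univ.filter (fun i => Relation.EqvGen (armRel S) i₀ i ∧
      fval S v σ i = t) with hA
    have hpA : p ∈ A := Finset.mem_filter.mpr ⟨Finset.mem_univ _, hPp⟩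
    have hqA : qa ∉ A := fun h => hqne (Finset.mem_filter.mp h).2.2
    -- membership in A implies membership in the class
    have hAQ : ∀ i ∈ A, Relation.EqvGen (armRel S) i₀ i :=
      fun i hi => (Finset.mem_filter.mp hi).2.1
    -- mixed clients
    set s : Fin M → ℝ := fun m => ∑ i ∈ (S m).filter (· ∈ A), σ m i with hs
    set Mx := Finset.univ.filter
      (fun m => (∃ i ∈ S m, i ∈ A) ∧ (∃ j ∈ S m, j ∉ A)) with hMx
    -- any arm of a client with an A-arm is in the class
    have hclientQ : ∀ m, (∃ i ∈ S m, i ∈ A) → ∀ j ∈ S m, Relation.EqvGen (armRel S) i₀ j := by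
      rintro m ⟨i, hiS, hiA⟩ j hj
      exact class_closed S (hAQ i hiA) hiS hj
    have hs_pos : ∀ m ∈ Mx, 0 < s m := by
      intro m hm
      obtain ⟨⟨i, hiS, hiA⟩, _⟩ := (Finset.mem_filter.mp hm).2
      apply Finset.sum_pos
      · intro i' hi'
        obtain ⟨hi'S, hi'A⟩ := Finset.mem_filter.mp hi'
        exact hpos m i' hi'S (hAQ i' hi'A)
      · exact ⟨i, Finset.mem_filter.mpr ⟨hiS, hiA⟩⟩
    have hs_lt : ∀ m ∈ Mx, s m < 1 := by
      intro m hm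
      obtain ⟨h1, ⟨j, hjS, hjA⟩⟩ := (Finset.mem_filter.mp hm).2
      have hsplit := Finset.sum_filter_add_sum_filter_not (S m) (· ∈ A) (σ m)
      rw [hΓ.2.1 m] at hsplit
      have hrest : 0 < ∑ i ∈ (S m).filter (fun i => ¬ i ∈ A), σ m i := by
        apply Finset.sum_pos'
        · intro i' hi'
          exact hΓ.1 m i' (Finset.mem_filter.mp hi').1
        · exact ⟨j, Finset.mem_filter.mpr ⟨hjS, hjA⟩,
            hpos m j hjS (hclientQ m h1 j hjS)⟩
      simp only [hs]
      linarith [hsplit]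
    have hmpMx : mp ∈ Mx := Finset.mem_filter.mpr
      ⟨Finset.mem_univ _, ⟨p, hpS, hpA⟩, ⟨qa, hqS, hqA⟩⟩
    have hMxne : (Mx.image (fun m => 1 - s m)).Nonempty :=
      ⟨_, Finset.mem_image_of_mem _ hmpMx⟩
    set d := (Mx.image (fun m => 1 - s m)).min' hMxne with hd
    have hd_pos : 0 < d := by
      obtain ⟨m', hm', heq⟩ := Finset.mem_image.mp (Finset.min'_mem _ hMxne)
      rw [hd, ← heq]
      linarith [hs_lt m' hm']
    have hd_le : ∀ m ∈ Mx, d ≤ 1 - s m :=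
      fun m hm => Finset.min'_le _ _ (Finset.mem_image_of_mem _ hm)
    set δ := d / 2 with hδ
    have hδpos : 0 < δ := by rw [hδ]; linarith
    have hδlt : ∀ m ∈ Mx, s m < 1 - δ := by
      intro m hm
      have := hd_le m hm
      rw [hδ]; linarith
    have hδlt1 : δ < 1 := by
      have := hd_le mp hmpMx
      have := hs_pos mp hmpMx
      rw [hδ]; linarith
    -- the shifted allocation τ
    set τ : Fin M → Fin K → ℝ := fun m i => if m ∈ Mx then
      (if i ∈ A then (1 - δ) * σ m i / s m else δ * σ m i / (1 - s m)) else σ m i with hτ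
    have hτpos : ∀ m, ∀ i ∈ S m, Relation.EqvGen (armRel S) i₀ i → 0 < τ m i := by
      intro m i hiS hiQ
      have hσpos := hpos m i hiS hiQ
      simp only [hτ]
      by_cases hm : m ∈ Mx
      · rw [if_pos hm]
        have h1 := hs_pos m hm
        have h2 := hs_lt m hm
        by_cases hiA : i ∈ A
        · rw [if_pos hiA]; have : (0:ℝ) < 1 - δ := by linarith
          positivity
        · rw [if_neg hiA]; have : (0:ℝ) < 1 - s m := by linarith
          positivity
      · rw [if_neg hm]; exact hσpos
    have hτΓ : τ ∈ Gam S := by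
      refine ⟨?_, ?_, ?_⟩
      · intro m i hiS
        have hσnn := hΓ.1 m i hiS
        simp only [hτ]
        by_cases hm : m ∈ Mx
        · rw [if_pos hm]
          have h1 := hs_pos m hm
          have h2 := hs_lt m hm
          by_cases hiA : i ∈ A
          · rw [if_pos hiA]
            have : (0:ℝ) ≤ 1 - δ := by linarith
            positivity
          · rw [if_neg hiA]
            have : (0:ℝ) < 1 - s m := by linarith
            positivity
        · rw [if_neg hm]; exact hσnn
      · intro m
        by_cases hm : m ∈ Mx
        · have h1 := (hs_pos m hm).ne'
          have h2 : (1 : ℝ) - s m ≠ 0 := by have := hs_lt m hm; intro h; linarith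
          have hsplit := Finset.sum_filter_add_sum_filter_not (S m) (· ∈ A) (σ m)
          rw [hΓ.2.1 m] at hsplit
          have hsm : s m = ∑ i ∈ (S m).filter (· ∈ A), σ m i := by simp only [hs]
          have hrest : ∑ i ∈ (S m).filter (fun i => ¬ i ∈ A), σ m i = 1 - s m := by
            rw [hsm]; linarith [hsplit]
          calc ∑ i ∈ S m, τ m i
              = ∑ i ∈ S m, (if i ∈ A then (1 - δ) * σ m i / s m
                  else δ * σ m i / (1 - s m)) := by
                apply Finset.sum_congr rfl
                intro i _
                simp only [hτ]; rw [if_pos hm]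
            _ = (∑ i ∈ (S m).filter (· ∈ A), (1 - δ) * σ m i / s m)
                + ∑ i ∈ (S m).filter (fun i => ¬ i ∈ A), δ * σ m i / (1 - s m) := by
                rw [Finset.sum_ite]
            _ = (1 - δ) / s m * (∑ i ∈ (S m).filter (· ∈ A), σ m i)
                + δ / (1 - s m) * ∑ i ∈ (S m).filter (fun i => ¬ i ∈ A), σ m i := by
                rw [Finset.mul_sum, Finset.mul_sum]
                congr 1 <;> apply Finset.sum_congr rfl <;> intro i _ <;> ring
            _ = 1 := by
                rw [hrest, ← hsm]
                field_simp
                ring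
        · calc ∑ i ∈ S m, τ m i = ∑ i ∈ S m, σ m i := by
                apply Finset.sum_congr rfl
                intro i _
                simp only [hτ]; rw [if_neg hm]
            _ = 1 := hΓ.2.1 m
      · intro m i hiS
        have h0 := hΓ.2.2 m i hiS
        simp only [hτ]; rw [h0]
        by_cases hm : m ∈ Mx
        · rw [if_pos hm]
          by_cases hiA : i ∈ A <;> simp [hiA]
        · rw [if_neg hm]
    -- per-term comparison of reciprocals for arms in A
    have hterm_le : ∀ i ∈ A, ∀ m, i ∈ S m → 1 / τ m i ≤ 1 / σ m i := by
      intro i hiA m hiS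
      have hσp := hpos m i hiS (hAQ i hiA)
      simp only [hτ]
      by_cases hm : m ∈ Mx
      · rw [if_pos hm, if_pos hiA, one_div_div]
        have h1 := hs_pos m hm
        have h2 := hδlt m hm
        have h3 : (0:ℝ) < 1 - δ := by linarith [hδlt1]
        rw [div_le_div_iff₀ (mul_pos h3 hσp) hσp]
        nlinarith
      · rw [if_neg hm]
    have hterm_lt : 1 / τ mp p < 1 / σ mp p := by
      have hσp := hpos mp p hpS (hAQ p hpA)
      simp only [hτ]
      rw [if_pos hmpMx, if_pos hpA, one_div_div]
      have h1 := hs_pos mp hmpMx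
      have h2 := hδlt mp hmpMx
      have h3 : (0:ℝ) < 1 - δ := by linarith [hδlt1]
      rw [div_lt_div_iff₀ (mul_pos h3 hσp) hσp]
      nlinarith
    have hDle : ∀ i ∈ A, armDenom S τ i ≤ armDenom S σ i := by
      intro i hiA
      rw [armDenom, armDenom]
      refine mul_le_mul_of_nonneg_left ?_ (by positivity)
      exact Finset.sum_le_sum (fun m hm => hterm_le i hiA m (Finset.mem_filter.mp hm).2)
    have hDτpos : ∀ i, Relation.EqvGen (armRel S) i₀ i → 0 < armDenom S τ i :=
      fun i hi => armDenom_pos S τ i (hcov i) (fun m hm => hτpos m i hm hi)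
    have hDσpos : ∀ i, Relation.EqvGen (armRel S) i₀ i → 0 < armDenom S σ i :=
      fun i hi => armDenom_pos S σ i (hcov i) (fun m hm => hpos m i hm hi)
    have hDp : armDenom S τ p < armDenom S σ p := by
      rw [armDenom, armDenom]
      have hMip : (0:ℝ) < (Mi S p : ℝ) := by exact_mod_cast Mi_pos S p (hcov p)
      refine mul_lt_mul_of_pos_left ?_ (by positivity)
      refine Finset.sum_lt_sum (fun m hm => hterm_le p hpA m (Finset.mem_filter.mp hm).2) ?_
      exact ⟨mp, Finset.mem_filter.mpr ⟨Finset.mem_univ _, hpS⟩, hterm_lt⟩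
    have hτA : ∀ i ∈ A, t ≤ fval S v τ i := by
      intro i hiA
      have heq := (Finset.mem_filter.mp hiA).2.2
      rw [← heq, fval, fval]
      exact div_le_div_of_nonneg_left (sq_nonneg _) (hDτpos i (hAQ i hiA)) (hDle i hiA)
    have hτp_gt : t < fval S v τ p := by
      rw [← hPp.2, fval, fval]
      exact div_lt_div_of_pos_left (pow_pos (delta_pos S hS v hv p (hcov p)) 2)
        (hDτpos p (hAQ p hpA)) hDp
    have hτnn : ∀ i, Relation.EqvGen (armRel S) i₀ i → 0 ≤ fval S v τ i :=
      fun i hi => div_nonneg (sq_nonneg _) (le_of_lt (hDτpos i hi))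
    -- choice of the mixing parameter
    set Bf := Finset.univ.filter (fun i => Relation.EqvGen (armRel S) i₀ i ∧
      fval S v σ i ≠ t) with hBfdef
    have hb₀Bf : b₀ ∈ Bf := Finset.mem_filter.mpr ⟨Finset.mem_univ _, hb₀Q, hb₀ne⟩
    have hBfgt : ∀ i ∈ Bf, t < fval S v σ i := by
      intro i hi
      obtain ⟨_, hiQ, hine⟩ := Finset.mem_filter.mp hi
      exact lt_of_le_of_ne (hlow i hiQ) (Ne.symm hine)
    have hBfne : (Bf.image (fun i => (fval S v σ i - t) / fval S v σ i)).Nonempty :=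
      ⟨_, Finset.mem_image_of_mem _ hb₀Bf⟩
    set e := (Bf.image (fun i => (fval S v σ i - t) / fval S v σ i)).min' hBfne with he
    have he_pos : 0 < e := by
      obtain ⟨i', hi', heq⟩ := Finset.mem_image.mp (Finset.min'_mem _ hBfne)
      have h1 := hBfgt i' hi'
      have h2 : 0 < fval S v σ i' := htpos.trans h1
      rw [he, ← heq]
      apply div_pos <;> linarith
    have he_le : ∀ i ∈ Bf, e ≤ (fval S v σ i - t) / fval S v σ i :=
      fun i hi => Finset.min'_le _ _ (Finset.mem_image_of_mem _ hi)
    have he_lt1 : e < 1 := by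
      have h1 := he_le b₀ hb₀Bf
      have h2 := hBfgt b₀ hb₀Bf
      have h3 : 0 < fval S v σ b₀ := htpos.trans h2
      have h4 : (fval S v σ b₀ - t) / fval S v σ b₀ < 1 := by
        rw [div_lt_one h3]; linarith
      linarith
    set θ := 1 - e / 2 with hθdef
    have hθpos : 0 < θ := by rw [hθdef]; linarith
    have hθlt : θ < 1 := by rw [hθdef]; linarith
    have hθε : 0 < 1 - θ := by rw [hθdef]; linarith
    have hεB : ∀ i ∈ Bf, t < θ * fval S v σ i := by
      intro i hi
      have hf := hBfgt i hi
      have hfpos : 0 < fval S v σ i := htpos.trans hf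
      have h1 : e * fval S v σ i ≤ fval S v σ i - t :=
        (le_div_iff₀ hfpos).mp (he_le i hi)
      rw [hθdef]
      nlinarith
    -- the perturbed allocation
    set σ' := fun m (j : Fin K) => θ * σ m j + (1 - θ) * τ m j with hσ'
    have hσ'Γ : σ' ∈ Gam S := by
      refine ⟨?_, ?_, ?_⟩
      · intro m i hiS
        have h1 := hΓ.1 m i hiS
        have h2 := hτΓ.1 m i hiS
        simp only [hσ']
        have := le_of_lt hθpos
        have := le_of_lt hθε
        positivity
      · intro m
        simp only [hσ']
        rw [Finset.sum_add_distrib, ← Finset.mul_sum, ← Finset.mul_sum,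
          hΓ.2.1 m, hτΓ.2.1 m]
        ring
      · intro m i hiS
        simp only [hσ']
        rw [hΓ.2.2 m i hiS, hτΓ.2.2 m i hiS]
        ring
    have hσ'pos : ∀ m, ∀ i ∈ S m, Relation.EqvGen (armRel S) i₀ i → 0 < σ' m i := by
      intro m i hiS hiQ
      simp only [hσ']
      exact add_pos (mul_pos hθpos (hpos m i hiS hiQ))
        (mul_pos hθε (hτpos m i hiS hiQ))
    have hcombo : ∀ i, Relation.EqvGen (armRel S) i₀ i →
        θ * fval S v σ i + (1 - θ) * fval S v τ i ≤ fval S v σ' i := by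
      intro i hi
      rw [hσ']
      exact fval_combo S v i (hcov i) σ τ (fun m hm => hpos m i hm hi)
        (fun m hm => hτpos m i hm hi) θ hθpos hθlt
    have hA' : ∀ i ∈ A, t ≤ fval S v σ' i := by
      intro i hiA
      have h1 := hcombo i (hAQ i hiA)
      have h2 := hτA i hiA
      have h3 := (Finset.mem_filter.mp hiA).2.2
      have h4 : (1 - θ) * t ≤ (1 - θ) * fval S v τ i :=
        mul_le_mul_of_nonneg_left h2 (le_of_lt hθε)
      rw [h3] at h1
      nlinarith
    have hp' : t < fval S v σ' p := by
      have h1 := hcombo p (hAQ p hpA)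
      have h4 : (1 - θ) * t < (1 - θ) * fval S v τ p :=
        mul_lt_mul_of_pos_left hτp_gt hθε
      rw [hPp.2] at h1
      nlinarith
    have hB' : ∀ i ∈ Bf, t < fval S v σ' i := by
      intro i hi
      have h1 := hcombo i (Finset.mem_filter.mp hi).2.1
      have h2 := hεB i hi
      have h3 : 0 ≤ (1 - θ) * fval S v τ i :=
        mul_nonneg (le_of_lt hθε) (hτnn i (Finset.mem_filter.mp hi).2.1)
      linarith
    -- the perturbed allocation is still optimal with value t
    have ht' : gtildeC S v (armClass S i₀) σ' = t := by
      refine le_antisymm (hmax σ' hσ'Γ) ?_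
      rw [gtildeC, if_neg]
      · refine le_csInf ⟨_, i₀, Relation.EqvGen.refl i₀, rfl⟩ ?_
        rintro x ⟨i, hiQ, rfl⟩
        by_cases hfi : fval S v σ i = t
        · exact hA' i (Finset.mem_filter.mpr ⟨Finset.mem_univ _, hiQ, hfi⟩)
        · exact le_of_lt (hB' i (Finset.mem_filter.mpr ⟨Finset.mem_univ _, hiQ, hfi⟩))
      · rintro ⟨m, i, hiS, hiQ, h0⟩
        exact (hσ'pos m i hiS hiQ).ne' h0
    -- the tight set of σ' is strictly smaller
    have hsub : Finset.univ.filter (fun i => Relation.EqvGen (armRel S) i₀ i ∧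
        fval S v σ' i = gtildeC S v (armClass S i₀) σ') ⊆ A.erase p := by
      intro i hi
      obtain ⟨_, hiQ, hfi⟩ := Finset.mem_filter.mp hi
      rw [ht'] at hfi
      by_cases hfσ : fval S v σ i = t
      · refine Finset.mem_erase.mpr ⟨?_, Finset.mem_filter.mpr ⟨Finset.mem_univ _, hiQ, hfσ⟩⟩
        rintro rfl
        exact (ne_of_gt hp') hfi
      · exact absurd hfi (ne_of_gt
          (hB' i (Finset.mem_filter.mpr ⟨Finset.mem_univ _, hiQ, hfσ⟩)))
    have hcard' : (Finset.univ.filter (fun i => Relation.EqvGen (armRel S) i₀ i ∧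
        fval S v σ' i = gtildeC S v (armClass S i₀) σ')).card ≤ n := by
      have h1 := Finset.card_le_card hsub
      have h2 : (A.erase p).card = A.card - 1 := Finset.card_erase_of_mem hpA
      have h3 : 0 < A.card := Finset.card_pos.mpr ⟨p, hpA⟩
      omega
    exact ih σ' hσ'Γ hσ'pos
      (fun ω' hω' => by rw [ht']; exact hmax ω' hω') hcard'
      ⟨b₀, hb₀Q, by rw [ht']; exact ne_of_gt (hB' b₀ hb₀Bf)⟩

lemma pseudo_balance (S : Fin M → Finset (Fin K)) (hS : ∀ m, 2 ≤ (S m).card)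
    (hcov : ∀ i : Fin K, ∃ m, i ∈ S m) (v : Fin M → Fin K → ℝ) (hv : v ∈ PSet S)
    (i₀ : Fin K) (σ : Fin M → Fin K → ℝ) (hΓ : σ ∈ Gam S)
    (hpos : ∀ m, ∀ i ∈ S m, Relation.EqvGen (armRel S) i₀ i → 0 < σ m i)
    (hmax : ∀ ω' ∈ Gam S, gtildeC S v (armClass S i₀) ω' ≤ gtildeC S v (armClass S i₀) σ) :
    ∀ i, Relation.EqvGen (armRel S) i₀ i →
      fval S v σ i = gtildeC S v (armClass S i₀) σ := by
  intro i hi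
  by_contra hne
  exact pb_aux S hS hcov v hv i₀
    (Finset.univ.filter (fun i => Relation.EqvGen (armRel S) i₀ i ∧
      fval S v σ i = gtildeC S v (armClass S i₀) σ)).card σ hΓ hpos hmax le_rfl ⟨i, hi, hne⟩

/-- Lemma 13: the common solution is unique. -/
theorem stmt9 (K M : ℕ) (hK : 2 ≤ K) (hM : 1 ≤ M) (S : Fin M → Finset (Fin K))
    (hS : ∀ m, 2 ≤ (S m).card) (hcov : ∀ i : Fin K, ∃ m, i ∈ S m)
    (v : Fin M → Fin K → ℝ) (hv : v ∈ PSet S)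
    (ω ω' : Fin M → Fin K → ℝ)
    (hω : IsCommonSol S v ω) (hω' : IsCommonSol S v ω') :
    ω = ω' := by
  by_contra hne
  have hdiff : ∃ m i, i ∈ S m ∧ ω m i ≠ ω' m i := by
    by_contra h
    push_neg at h
    apply hne
    funext m i
    by_cases hiS : i ∈ S m
    · exact h m i hiS
    · rw [hω.1.2.2 m i hiS, hω'.1.2.2 m i hiS]
  obtain ⟨m₀, i₀, hi₀S, hd⟩ := hdiff
  have hωpos := common_pos S hS hcov v hv ω hω
  have hω'pos := common_pos S hS hcov v hv ω' hω'
  set σ := fun m (j : Fin K) => (ω m j + ω' m j) / 2 with hσdef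
  have hσpos : ∀ m, ∀ i ∈ S m, 0 < σ m i := by
    intro m i hiS
    have h1 := hωpos m i hiS
    have h2 := hω'pos m i hiS
    simp only [hσdef]
    positivity
  have hσΓ : σ ∈ Gam S := by
    refine ⟨fun m i hiS => le_of_lt (hσpos m i hiS), ?_, ?_⟩
    · intro m
      simp only [hσdef]
      rw [← Finset.sum_div, Finset.sum_add_distrib, hω.1.2.1 m, hω'.1.2.1 m]
      norm_num
    · intro m i hiS
      simp only [hσdef]
      rw [hω.1.2.2 m i hiS, hω'.1.2.2 m i hiS]
      norm_num
  set t := gtildeC S v (armClass S i₀) ω with ht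
  have htω' : gtildeC S v (armClass S i₀) ω' = t :=
    le_antisymm (hω.2.2 i₀ ω' hω'.1) (hω'.2.2 i₀ ω hω.1)
  have hteqω : t = sInf {x | ∃ i ∈ armClass S i₀, x = Delta S v i ^ 2 / armDenom S ω i} := by
    rw [ht, gtildeC, if_neg]
    rintro ⟨m, i, hiS, _, h0⟩
    exact (hωpos m i hiS).ne' h0
  have hteqω' : t = sInf {x | ∃ i ∈ armClass S i₀, x = Delta S v i ^ 2 / armDenom S ω' i} := by
    rw [← htω', gtildeC, if_neg]
    rintro ⟨m, i, hiS, _, h0⟩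
    exact (hω'pos m i hiS).ne' h0
  have hfω : ∀ i, Relation.EqvGen (armRel S) i₀ i → t ≤ fval S v ω i := by
    intro i hi
    rw [hteqω]
    exact csInf_le (finite_exists_set _ _).bddBelow ⟨i, hi, rfl⟩
  have hfω' : ∀ i, Relation.EqvGen (armRel S) i₀ i → t ≤ fval S v ω' i := by
    intro i hi
    rw [hteqω']
    exact csInf_le (finite_exists_set _ _).bddBelow ⟨i, hi, rfl⟩
  have hσge : t ≤ gtildeC S v (armClass S i₀) σ := by
    rw [gtildeC, if_neg]
    · refine le_csInf ⟨_, i₀, Relation.EqvGen.refl i₀, rfl⟩ ?_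
      rintro x ⟨i, hiQ, rfl⟩
      have h2 := fval_mid_ge S v i (hcov i) ω ω'
        (fun m hm => hωpos m i hm) (fun m hm => hω'pos m i hm)
      rw [← hσdef] at h2
      exact le_trans (le_min (hfω i hiQ) (hfω' i hiQ)) h2
    · rintro ⟨m, i, hiS, _, h0⟩
      exact (hσpos m i hiS).ne' h0
  have hσt : gtildeC S v (armClass S i₀) σ = t :=
    le_antisymm (hω.2.2 i₀ σ hσΓ) hσge
  have hσmax : ∀ ω'' ∈ Gam S, gtildeC S v (armClass S i₀) ω''
      ≤ gtildeC S v (armClass S i₀) σ := by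
    intro ω'' hω''
    rw [hσt]
    exact hω.2.2 i₀ ω'' hω''
  have hpb := pseudo_balance S hS hcov v hv i₀ σ hσΓ
    (fun m i hm _ => hσpos m i hm) hσmax i₀ (Relation.EqvGen.refl i₀)
  have hstrict : min (fval S v ω i₀) (fval S v ω' i₀) < fval S v σ i₀ := by
    have h := fval_mid_gt S v i₀ (hcov i₀) (delta_pos S hS v hv i₀ (hcov i₀))
      (Mi_pos S i₀ (hcov i₀)) ω ω' (fun m hm => hωpos m i₀ hm)
      (fun m hm => hω'pos m i₀ hm) ⟨m₀, hi₀S, hd⟩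
    rw [← hσdef] at h
    exact h
  have hlt : t < fval S v σ i₀ :=
    lt_of_le_of_lt (le_min (hfω i₀ (Relation.EqvGen.refl i₀))
      (hfω' i₀ (Relation.EqvGen.refl i₀))) hstrict
  rw [hpb, hσt] at hlt
  exact lt_irrefl t hlt

end

end HetTS
end

section
/- Fix an integer n ≥ 1. Let Y₁,…,Yₙ be independent real-valued random variables on a probability space such that P(Y_i ≤ y) ≤ y for all y ∈ [0,1] and each Y_i takes values in (0,1] almost surely. Then for every ε > 0, P(Σ_{i=1}^n log(1/Y_i) ≥ ε) ≤ f_n(ε), where f_n(x) := Σ_{i=1}^n x^{i−1} e^{−x}/(i−1)!. (Lemma 7 of the paper.) -/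
/-!
Each `log (1 / Y i)` is stochastically dominated by an `Exp(1)` variable,
`P(log (1 / Y i) ≥ t) ≤ e⁻ᵗ`, and `f_n` is the tail of `Gamma(n, 1)`, the law of a sum of `n`
independent `Exp(1)` variables. Induct on the number of summands: conditioning on the partial
sum `S` gives `P(S + X ≥ ε) ≤ E[min(1, e^{S - ε})]`, and the layer-cake formula writes the
right-hand side as `e^{-ε} + ∫₀^ε e^{t - ε} P(S > t) dt`, which the bound `P(S ≥ t) ≤ f_m(t)`
turns into `f_{m+1}(ε)`.
-/

open MeasureTheory ProbabilityTheory Real Set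
open scoped Nat

/-- For `x ≥ 0`, the tail `P(G ≥ x)` of a `Gamma(m, 1)` variable `G`. -/
noncomputable def gammaTail (m : ℕ) (x : ℝ) : ℝ :=
  ∑ i ∈ Finset.range m, x ^ i * exp (-x) / i !

lemma gammaTail_nonneg (m : ℕ) {x : ℝ} (hx : 0 ≤ x) : 0 ≤ gammaTail m x :=
  Finset.sum_nonneg fun _ _ => by positivity

lemma integral_gammaTail_mul_exp (m : ℕ) (x : ℝ) :
    ∫ t in (0)..x, gammaTail m t * exp (t - x) = gammaTail (m + 1) x - exp (-x) := by
  have hterm : ∀ t, gammaTail m t * exp (t - x) =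
      ∑ i ∈ Finset.range m, t ^ i * (exp (-x) / i !) := fun t => by
    rw [gammaTail, Finset.sum_mul]
    refine Finset.sum_congr rfl fun i _ => ?_
    rw [show exp (-x) = exp (-t) * exp (t - x) by rw [← exp_add]; ring_nf]
    ring
  have hpow : ∀ i, ∫ t in (0)..x, t ^ i * (exp (-x) / i !) = x ^ (i + 1) * exp (-x) / (i + 1)! :=
    fun i => by
      rw [intervalIntegral.integral_mul_const, integral_pow, Nat.factorial_succ]
      push_cast
      field_simp
      ring
  simp_rw [hterm]
  rw [intervalIntegral.integral_finsetSum fun i _ =>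
    ((continuous_pow i).intervalIntegrable _ _).mul_const _]
  simp [gammaTail, Finset.sum_range_succ', hpow]

section
variable {Ω : Type*} [MeasurableSpace Ω] {μ : Measure Ω}

lemma measure_le_log_one_div_le [IsProbabilityMeasure μ] {Z : Ω → ℝ}
    (hcdf : ∀ y ∈ Icc (0 : ℝ) 1, μ {ω | Z ω ≤ y} ≤ ENNReal.ofReal y)
    (hpos : ∀ᵐ ω ∂μ, 0 < Z ω) (t : ℝ) :
    μ {ω | t ≤ log (1 / Z ω)} ≤ ENNReal.ofReal (exp (-t)) := by
  rcases le_or_gt t 0 with ht | ht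
  · exact prob_le_one.trans (ENNReal.one_le_ofReal.2 (one_le_exp (by linarith)))
  calc μ {ω | t ≤ log (1 / Z ω)} ≤ μ {ω | Z ω ≤ exp (-t)} := by
        refine measure_mono_ae ?_
        filter_upwards [hpos] with ω hω (hle : t ≤ log (1 / Z ω))
        rw [one_div, log_inv] at hle
        exact (log_le_iff_le_exp hω).1 (by linarith)
    _ ≤ ENNReal.ofReal (exp (-t)) := hcdf _ ⟨(exp_pos _).le, exp_le_one_iff.2 (by linarith)⟩

lemma ProbabilityTheory.IndepFun.measure_le_add_eq_lintegral [IsFiniteMeasure μ] {S X : Ω → ℝ}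
    (hS : Measurable S) (hX : Measurable X) (hSX : IndepFun S X μ) (ε : ℝ) :
    μ {ω | ε ≤ S ω + X ω} = ∫⁻ s, μ {ω | ε - s ≤ X ω} ∂(μ.map S) := by
  have hA : MeasurableSet {p : ℝ × ℝ | ε ≤ p.1 + p.2} :=
    measurableSet_le measurable_const (measurable_fst.add measurable_snd)
  calc μ {ω | ε ≤ S ω + X ω} = μ.map (fun ω => (S ω, X ω)) {p | ε ≤ p.1 + p.2} := by
        rw [Measure.map_apply (hS.prodMk hX) hA]; rfl
    _ = ((μ.map S).prod (μ.map X)) {p | ε ≤ p.1 + p.2} := by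
        rw [(indepFun_iff_map_prod_eq_prod_map_map hS.aemeasurable hX.aemeasurable).mp hSX]
    _ = ∫⁻ s, μ.map X {x | ε ≤ s + x} ∂(μ.map S) := Measure.prod_apply hA
    _ = ∫⁻ s, μ {ω | ε - s ≤ X ω} ∂(μ.map S) := by
        refine lintegral_congr fun s => ?_
        rw [Measure.map_apply hX (show MeasurableSet {x : ℝ | ε ≤ s + x} from
          measurableSet_le measurable_const (measurable_const_add s))]
        congr 1
        ext ω
        simp only [Set.mem_preimage, Set.mem_ofPred_eq, sub_le_iff_le_add']

lemma measure_le_add_le_lintegral_exp [IsProbabilityMeasure μ] {S X : Ω → ℝ}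
    (hS : Measurable S) (hX : Measurable X) (hSX : IndepFun S X μ)
    (hXtail : ∀ t, μ {ω | t ≤ X ω} ≤ ENNReal.ofReal (exp (-t))) (ε : ℝ) :
    μ {ω | ε ≤ S ω + X ω} ≤ ∫⁻ ω, ENNReal.ofReal (exp (min (S ω) ε - ε)) ∂μ := by
  rw [hSX.measure_le_add_eq_lintegral hS hX,
    ← lintegral_map (f := fun s => ENNReal.ofReal (exp (min s ε - ε))) (by fun_prop) hS]
  refine lintegral_mono fun s => ?_
  rcases le_total s ε with h | h
  · simpa only [min_eq_left h, neg_sub] using hXtail (ε - s)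
  · rw [min_eq_right h, sub_self, exp_zero, ENNReal.ofReal_one]
    exact prob_le_one

lemma lintegral_exp_min_sub_le_gammaTail [IsProbabilityMeasure μ] {S : Ω → ℝ}
    (hS : Measurable S) (hS0 : 0 ≤ᵐ[μ] S) {m : ℕ}
    (hStail : ∀ t > 0, μ {ω | t ≤ S ω} ≤ ENNReal.ofReal (gammaTail m t)) {ε : ℝ} (hε : 0 < ε) :
    ∫⁻ ω, ENNReal.ofReal (exp (min (S ω) ε - ε)) ∂μ ≤ ENNReal.ofReal (gammaTail (m + 1) ε) := by
  have hexp_integral : ∀ y, ∫ t in (0)..y, exp (t - ε) = exp (y - ε) - exp (-ε) := fun y => by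
    simp [intervalIntegral.integral_comp_sub_right fun t => exp t, integral_exp]
  have hsplit : ∀ᵐ ω ∂μ, ENNReal.ofReal (exp (min (S ω) ε - ε)) =
      ENNReal.ofReal (exp (-ε)) + ENNReal.ofReal (∫ t in (0)..min (S ω) ε, exp (t - ε)) := by
    filter_upwards [hS0] with ω hω
    have hmin : 0 ≤ min (S ω) ε := le_min hω hε.le
    rw [hexp_integral,
      ← ENNReal.ofReal_add (exp_pos _).le (sub_nonneg.2 (exp_le_exp.2 (by linarith))),
      add_sub_cancel]
  have hlayer := lintegral_comp_eq_lintegral_meas_lt_mul μ (f := fun ω => min (S ω) ε)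
    (g := fun t => exp (t - ε)) (hS0.mono fun ω hω => le_min hω hε.le)
    (hS.min measurable_const).aemeasurable
    (fun _ _ => by apply Continuous.intervalIntegrable; fun_prop)
    (ae_of_all _ fun _ => (exp_pos _).le)
  have hbound : ∫⁻ t in Ioi 0, μ {ω | t < min (S ω) ε} * ENNReal.ofReal (exp (t - ε)) ≤
      ∫⁻ t in Ioo 0 ε, ENNReal.ofReal (gammaTail m t * exp (t - ε)) := by
    rw [← Ioi_inter_Iio, inter_comm, ← Measure.restrict_restrict measurableSet_Iio,
      ← lintegral_indicator measurableSet_Iio]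
    refine setLIntegral_mono' measurableSet_Ioi fun t (ht : 0 < t) => ?_
    by_cases htε : t < ε
    · rw [indicator_of_mem (show t ∈ Iio ε from htε),
        ENNReal.ofReal_mul (gammaTail_nonneg m ht.le)]
      gcongr
      calc μ {ω | t < min (S ω) ε} ≤ μ {ω | t ≤ S ω} :=
            measure_mono fun ω (hω : t < min (S ω) ε) => (hω.trans_le (min_le_left _ _)).le
        _ ≤ ENNReal.ofReal (gammaTail m t) := hStail t ht
    · have hempty : {ω | t < min (S ω) ε} = ∅ :=
        eq_empty_of_forall_notMem fun ω (hω : t < min (S ω) ε) =>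
          htε (hω.trans_le (min_le_right _ _))
      rw [hempty, measure_empty, zero_mul]
      exact zero_le
  have hconv : ∫⁻ t in Ioo 0 ε, ENNReal.ofReal (gammaTail m t * exp (t - ε)) =
      ENNReal.ofReal (∫ t in (0)..ε, gammaTail m t * exp (t - ε)) := by
    rw [intervalIntegral.integral_of_le hε.le, integral_Ioc_eq_integral_Ioo,
      ofReal_integral_eq_lintegral_ofReal]
    · exact (Continuous.integrableOn_Icc (by unfold gammaTail; fun_prop)).mono_set
        Ioo_subset_Icc_self
    · filter_upwards [ae_restrict_mem measurableSet_Ioo] with t ht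
      exact mul_nonneg (gammaTail_nonneg m ht.1.le) (exp_pos _).le
  have hconv_nonneg : 0 ≤ ∫ t in (0)..ε, gammaTail m t * exp (t - ε) :=
    intervalIntegral.integral_nonneg hε.le fun t ht =>
      mul_nonneg (gammaTail_nonneg m ht.1) (exp_pos _).le
  calc ∫⁻ ω, ENNReal.ofReal (exp (min (S ω) ε - ε)) ∂μ
      = ENNReal.ofReal (exp (-ε)) +
          ∫⁻ ω, ENNReal.ofReal (∫ t in (0)..min (S ω) ε, exp (t - ε)) ∂μ := by
        rw [lintegral_congr_ae hsplit, lintegral_add_left measurable_const, lintegral_const,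
          measure_univ, mul_one]
    _ ≤ ENNReal.ofReal (exp (-ε)) +
          ENNReal.ofReal (∫ t in (0)..ε, gammaTail m t * exp (t - ε)) := by
        rw [hlayer, ← hconv]
        gcongr
    _ = ENNReal.ofReal (gammaTail (m + 1) ε) := by
        rw [← ENNReal.ofReal_add (exp_pos _).le hconv_nonneg, integral_gammaTail_mul_exp,
          add_sub_cancel]

theorem measure_le_sum_le_gammaTail [IsProbabilityMeasure μ] {ι : Type*} {X : ι → Ω → ℝ}
    (hmeas : ∀ i, Measurable (X i)) (hindep : iIndepFun X μ) (hnonneg : ∀ i, 0 ≤ᵐ[μ] X i)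
    (htail : ∀ i t, μ {ω | t ≤ X i ω} ≤ ENNReal.ofReal (exp (-t))) (s : Finset ι) {t : ℝ}
    (ht : 0 < t) :
    μ {ω | t ≤ ∑ i ∈ s, X i ω} ≤ ENNReal.ofReal (gammaTail s.card t) := by
  classical
  induction s using Finset.induction_on generalizing t with
  | empty => simp [ht.not_ge]
  | insert a s ha ih =>
    have hS : Measurable fun ω => ∑ i ∈ s, X i ω := Finset.measurable_sum s fun i _ => hmeas i
    have hS0 : 0 ≤ᵐ[μ] fun ω => ∑ i ∈ s, X i ω := by
      filter_upwards [(Filter.eventually_all_finset s).2 fun i _ => hnonneg i] with ω hω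
      exact Finset.sum_nonneg hω
    have hSX : IndepFun (fun ω => ∑ i ∈ s, X i ω) (X a) μ := by
      simpa [Finset.sum_fn] using hindep.indepFun_finsetSum_of_notMem hmeas ha
    simp only [Finset.sum_insert ha, Finset.card_insert_of_notMem ha, add_comm (X a _)]
    exact (measure_le_add_le_lintegral_exp hS (hmeas a) hSX (htail a) t).trans
      (lintegral_exp_min_sub_le_gammaTail hS hS0 (fun _ => ih) ht)

end

theorem stmt14_general {Ω : Type*} [MeasurableSpace Ω] (μ : Measure Ω) [IsProbabilityMeasure μ]
    (n : ℕ) (Y : Fin n → Ω → ℝ)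
    (hmeas : ∀ i, Measurable (Y i))
    (hindep : ProbabilityTheory.iIndepFun Y μ)
    (hcdf : ∀ i, ∀ y ∈ Set.Icc (0 : ℝ) 1, μ {ω | Y i ω ≤ y} ≤ ENNReal.ofReal y)
    (hrange : ∀ i, ∀ᵐ ω ∂μ, Y i ω ∈ Set.Ioc (0 : ℝ) 1) :
    ∀ ε : ℝ, 0 < ε →
      μ {ω | ε ≤ ∑ i, Real.log (1 / Y i ω)} ≤
        ENNReal.ofReal (∑ i ∈ Finset.range n, ε ^ i * Real.exp (-ε) / (Nat.factorial i)) := by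
  intro ε hε
  have hlog : ∀ i, Measurable fun ω => log (1 / Y i ω) := fun i => by fun_prop
  have hnonneg : ∀ i, 0 ≤ᵐ[μ] fun ω => log (1 / Y i ω) := fun i =>
    (hrange i).mono fun ω hω => log_nonneg (one_le_one_div hω.1 hω.2)
  have htail : ∀ i t, μ {ω | t ≤ log (1 / Y i ω)} ≤ ENNReal.ofReal (exp (-t)) := fun i =>
    measure_le_log_one_div_le (hcdf i) ((hrange i).mono fun _ hω => hω.1)
  have hindep_log : iIndepFun (fun i ω => log (1 / Y i ω)) μ :=
    hindep.comp (fun _ y => log (1 / y)) fun _ => by fun_prop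
  simpa [gammaTail] using
    measure_le_sum_le_gammaTail hlog hindep_log hnonneg htail Finset.univ hε

/-- Lemma 7: if `Y₁,…,Yₙ` are independent, valued in `(0,1]` a.s., and stochastically
dominate the uniform distribution (`P(Y_i ≤ y) ≤ y` on `[0,1]`), then
`P(∑ log(1/Y_i) ≥ ε) ≤ f_n(ε)` where `f_n(x) = ∑_{i=1}^n x^{i-1} e^{-x}/(i-1)!`. -/
theorem stmt14 {Ω : Type*} [MeasurableSpace Ω] (μ : Measure Ω) [IsProbabilityMeasure μ]
    (n : ℕ) (hn : 1 ≤ n) (Y : Fin n → Ω → ℝ)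
    (hmeas : ∀ i, Measurable (Y i))
    (hindep : ProbabilityTheory.iIndepFun Y μ)
    (hcdf : ∀ i, ∀ y ∈ Set.Icc (0 : ℝ) 1, μ {ω | Y i ω ≤ y} ≤ ENNReal.ofReal y)
    (hrange : ∀ i, ∀ᵐ ω ∂μ, Y i ω ∈ Set.Ioc (0 : ℝ) 1) :
    ∀ ε : ℝ, 0 < ε →
      μ {ω | ε ≤ ∑ i, Real.log (1 / Y i ω)} ≤
        ENNReal.ofReal (∑ i ∈ Finset.range n, ε ^ i * Real.exp (-ε) / (Nat.factorial i)) :=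
  stmt14_general μ n Y hmeas hindep hcdf hrange
end

section
/- Fix an integer n ≥ 1 and define f_n : (0,∞) → (0,1) by f_n(x) := Σ_{i=1}^n x^{i−1} e^{−x}/(i−1)!, a strictly decreasing continuous bijection, with inverse f_n^{-1} : (0,1) → (0,∞). Then lim_{δ→0⁺} log(1/δ)/f_n^{-1}(δ) = 1; equivalently, lim_{x→∞} log(1/f_n(x))/x = 1. (Lemma 9 of the paper.) -/
open Set Filter

lemma stmt17_aux (n : ℕ) (hn : 1 ≤ n)
    (f : ℝ → ℝ)
    (hf : ∀ x, f x = ∑ i ∈ Finset.range n, x ^ i * Real.exp (-x) / (Nat.factorial i)) :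
    Tendsto (fun x => Real.log (1 / f x) / x) atTop (nhds 1) := by
  set S : ℝ → ℝ := fun x => ∑ i ∈ Finset.range n, x ^ i / (Nat.factorial i) with hS
  have hfS : ∀ x, f x = Real.exp (-x) * S x := by
    intro x
    rw [hf, hS, Finset.mul_sum]
    refine Finset.sum_congr rfl fun i _ => by ring
  have hS1 : ∀ x : ℝ, 1 ≤ x → 1 ≤ S x := by
    intro x hx
    have h0 : (0:ℕ) ∈ Finset.range n := Finset.mem_range.2 hn
    have := Finset.single_le_sum (f := fun i => x ^ i / (Nat.factorial i))
      (fun i _ => by positivity) h0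
    simpa using this
  have hSub : ∀ x : ℝ, 1 ≤ x → S x ≤ (n : ℝ) * x ^ (n - 1) := by
    intro x hx
    have := Finset.sum_le_card_nsmul (Finset.range n)
      (fun i => x ^ i / (Nat.factorial i)) (x ^ (n - 1)) ?_
    · simpa [nsmul_eq_mul] using this
    · intro i hi
      have hi' : i ≤ n - 1 := Nat.le_sub_one_of_lt (Finset.mem_range.1 hi)
      calc x ^ i / (Nat.factorial i) ≤ x ^ i / 1 := by
            apply div_le_div_of_nonneg_left (by positivity) one_pos
            exact_mod_cast Nat.one_le_iff_ne_zero.2 (Nat.factorial_ne_zero i)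
      _ = x ^ i := by ring
      _ ≤ x ^ (n - 1) := pow_le_pow_right₀ hx hi'
  -- log S x / x → 0
  have hT : Tendsto (fun x => Real.log (S x) / x) atTop (nhds 0) := by
    have hup : Tendsto (fun x : ℝ => Real.log n / x + (n - 1 : ℝ) * (Real.log x / x))
        atTop (nhds 0) := by
      have h1 : Tendsto (fun x : ℝ => Real.log n / x) atTop (nhds 0) :=
        tendsto_const_nhds.div_atTop tendsto_id
      have h2 : Tendsto (fun x : ℝ => Real.log x / x) atTop (nhds 0) := by
        simpa using Real.isLittleO_log_id_atTop.tendsto_div_nhds_zero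
      simpa using h1.add (h2.const_mul (n - 1 : ℝ))
    refine tendsto_of_tendsto_of_tendsto_of_le_of_le' tendsto_const_nhds hup ?_ ?_
    · filter_upwards [eventually_ge_atTop (1 : ℝ)] with x hx
      have hx0 : (0:ℝ) < x := lt_of_lt_of_le one_pos hx
      have := Real.log_nonneg (hS1 x hx)
      positivity
    · filter_upwards [eventually_ge_atTop (1 : ℝ)] with x hx
      have hx0 : (0:ℝ) < x := lt_of_lt_of_le one_pos hx
      have hlog : Real.log (S x) ≤ Real.log n + (n - 1 : ℝ) * Real.log x := by
        have hn0 : (0:ℝ) < n := by exact_mod_cast hn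
        have hb : (0:ℝ) < (n : ℝ) * x ^ (n - 1) := by positivity
        calc Real.log (S x) ≤ Real.log ((n : ℝ) * x ^ (n - 1)) :=
              Real.log_le_log (lt_of_lt_of_le one_pos (hS1 x hx)) (hSub x hx)
        _ = Real.log n + (n - 1 : ℝ) * Real.log x := by
              rw [Real.log_mul (ne_of_gt hn0) (by positivity), Real.log_pow]
              push_cast [Nat.cast_sub hn]
              ring
      calc Real.log (S x) / x ≤ (Real.log n + (n - 1 : ℝ) * Real.log x) / x := by
            gcongr
      _ = Real.log n / x + (n - 1 : ℝ) * (Real.log x / x) := by ring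
  -- conclude
  have heq : (fun x => Real.log (1 / f x) / x) =ᶠ[atTop]
      (fun x => 1 - Real.log (S x) / x) := by
    filter_upwards [eventually_ge_atTop (1 : ℝ)] with x hx
    have hx0 : (0:ℝ) < x := lt_of_lt_of_le one_pos hx
    have hSpos : (0:ℝ) < S x := lt_of_lt_of_le one_pos (hS1 x hx)
    have hfx : f x = Real.exp (-x) * S x := hfS x
    have : Real.log (1 / f x) = x - Real.log (S x) := by
      rw [hfx, one_div, Real.log_inv, Real.log_mul (Real.exp_ne_zero _) (ne_of_gt hSpos),
        Real.log_exp]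
      ring
    rw [this, sub_div, div_self (ne_of_gt hx0)]
  rw [tendsto_congr' heq]
  have := tendsto_const_nhds (α := ℝ) (x := (1:ℝ)) (f := atTop) |>.sub hT
  simpa using this

/-- Lemma 9: with `f_n(x) = ∑_{i=1}^n x^{i-1} e^{-x}/(i-1)!` and `f_n⁻¹` its inverse,
`log(1/δ)/f_n⁻¹(δ) → 1` as `δ → 0⁺`; equivalently `log(1/f_n(x))/x → 1` as `x → ∞`. -/
theorem stmt17 (n : ℕ) (hn : 1 ≤ n)
    (f : ℝ → ℝ)
    (hf : ∀ x, f x = ∑ i ∈ Finset.range n, x ^ i * Real.exp (-x) / (Nat.factorial i))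
    (finv : ℝ → ℝ)
    (hinv : ∀ δ ∈ Ioo (0 : ℝ) 1, finv δ ∈ Ioi (0 : ℝ) ∧ f (finv δ) = δ) :
    Tendsto (fun δ => Real.log (1 / δ) / finv δ) (nhdsWithin 0 (Ioi 0)) (nhds 1) ∧
    Tendsto (fun x => Real.log (1 / f x) / x) atTop (nhds 1) := by
  have hsecond := stmt17_aux n hn f hf
  have hIoo : Ioo (0:ℝ) 1 ∈ nhdsWithin (0:ℝ) (Ioi 0) :=
    Ioo_mem_nhdsGT_of_mem (by simp)
  -- finv δ ≥ -log δ on Ioo 0 1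
  have hge : ∀ δ ∈ Ioo (0:ℝ) 1, -Real.log δ ≤ finv δ := by
    intro δ hδ
    obtain ⟨hpos, heq⟩ := hinv δ hδ
    have hx0 : (0:ℝ) < finv δ := hpos
    have hexp : Real.exp (-finv δ) ≤ f (finv δ) := by
      rw [hf]
      have h0 : (0:ℕ) ∈ Finset.range n := Finset.mem_range.2 hn
      have := Finset.single_le_sum
        (f := fun i => (finv δ) ^ i * Real.exp (-(finv δ)) / (Nat.factorial i))
        (fun i _ => by positivity) h0
      simpa using this
    rw [heq] at hexp
    have : -finv δ ≤ Real.log δ := by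
      have := Real.log_le_log (Real.exp_pos _) hexp
      rwa [Real.log_exp] at this
    linarith
  have htends : Tendsto finv (nhdsWithin (0:ℝ) (Ioi 0)) atTop := by
    refine tendsto_atTop_mono' _ ?_
      (tendsto_neg_atBot_atTop.comp Real.tendsto_log_nhdsGT_zero)
    filter_upwards [hIoo] with δ hδ
    exact hge δ hδ
  constructor
  · have hcomp := hsecond.comp htends
    refine hcomp.congr' ?_
    filter_upwards [hIoo] with δ hδ
    simp [Function.comp, (hinv δ hδ).2]
  · exact hsecond
end
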